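/- arXiv:astro-ph/9412096 — 3 statements merged into one kernel-verified Lean document; each statement's English description precedes it below -/
import Mathlib

section
/- If the characteristic function of a real random variable satisfies φ(t) = φ(αt)·φ(βt) for all t, where α = cos θ and β = sin θ for some θ with sin θ cos θ ≠ 0, and φ(t) = exp(g₂ t²) for some complex g₂, then this functional equation is satisfied; conversely, among functions of the form exp(Σₙ gₙ tⁿ) (finite or convergent series), only those with gₙ = 0 for n ≠ 2 satisfy it. -/
/-- If a power series sums to `0` at every nonzero real point, its constant coefficient
vanishes. -/
lemma aux_coeff0 (a : ℕ → ℂ)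
    (H : ∀ t : ℝ, t ≠ 0 → HasSum (fun n : ℕ => a n * (t : ℂ) ^ n) 0) : a 0 = 0 := by
  have h1 := H 1 one_ne_zero
  simp only [Complex.ofReal_one, one_pow, mul_one] at h1
  have hsum : Summable fun n => ‖a n‖ := summable_norm_iff.mpr h1.summable
  have hsum' : Summable fun n => ‖a (n + 1)‖ := (summable_nat_add_iff 1).mpr hsum
  set C := ∑' n, ‖a (n + 1)‖ with hC
  have hCnn : 0 ≤ C := tsum_nonneg fun n => norm_nonneg _
  have key : ∀ t : ℝ, 0 < t → t ≤ 1 → ‖a 0‖ ≤ C * t := by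
    intro t ht ht1
    have h := H t (ne_of_gt ht)
    have h2 : HasSum (fun n => a (n + 1) * (t : ℂ) ^ (n + 1)) (-(a 0)) := by
      refine (hasSum_nat_add_iff (f := fun n => a n * (t : ℂ) ^ n) 1).mpr ?_
      simpa using h
    have hb : ∀ n : ℕ, ‖a (n + 1) * (t : ℂ) ^ (n + 1)‖ ≤ ‖a (n + 1)‖ * t := by
      intro n
      rw [norm_mul, norm_pow, Complex.norm_real, Real.norm_eq_abs, abs_of_pos ht]
      have : t ^ (n + 1) ≤ t ^ 1 := pow_le_pow_of_le_one ht.le ht1 (by omega)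
      have h0 : (0:ℝ) ≤ ‖a (n+1)‖ := norm_nonneg _
      calc ‖a (n + 1)‖ * t ^ (n + 1) ≤ ‖a (n + 1)‖ * t ^ 1 := by gcongr
        _ = ‖a (n + 1)‖ * t := by ring
    have hsn : Summable fun n => ‖a (n + 1) * (t : ℂ) ^ (n + 1)‖ :=
      Summable.of_nonneg_of_le (fun n => norm_nonneg _) hb (hsum'.mul_right t)
    have : ‖a 0‖ = ‖∑' n, a (n + 1) * (t : ℂ) ^ (n + 1)‖ := by
      rw [h2.tsum_eq, norm_neg]
    rw [this]
    calc ‖∑' n, a (n + 1) * (t : ℂ) ^ (n + 1)‖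
        ≤ ∑' n, ‖a (n + 1) * (t : ℂ) ^ (n + 1)‖ := norm_tsum_le_tsum_norm hsn
      _ ≤ ∑' n, ‖a (n + 1)‖ * t := Summable.tsum_le_tsum hb hsn (hsum'.mul_right t)
      _ = C * t := tsum_mul_right
  by_contra hne
  have hpos : 0 < ‖a 0‖ := norm_pos_iff.mpr hne
  set t : ℝ := min 1 (‖a 0‖ / (2 * (C + 1))) with hT
  have ht0 : 0 < t := lt_min one_pos (by positivity)
  have ht1 : t ≤ 1 := min_le_left _ _
  have ht2 : t ≤ ‖a 0‖ / (2 * (C + 1)) := min_le_right _ _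
  have := key t ht0 ht1
  have hCt : C * t ≤ (C + 1) * (‖a 0‖ / (2 * (C + 1))) := by
    have h1 : C * t ≤ (C + 1) * t := by nlinarith
    have h2 : (C + 1) * t ≤ (C + 1) * (‖a 0‖ / (2 * (C + 1))) := by
      apply mul_le_mul_of_nonneg_left ht2 (by linarith)
    linarith
  have hhalf : (C + 1) * (‖a 0‖ / (2 * (C + 1))) = ‖a 0‖ / 2 := by
    field_simp
  linarith [hhalf ▸ hCt]

/-- If a power series sums to `0` at every nonzero real point, all its coefficients
vanish. -/
lemma aux_coeffn (n : ℕ) : ∀ a : ℕ → ℂ,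
    (∀ t : ℝ, t ≠ 0 → HasSum (fun n : ℕ => a n * (t : ℂ) ^ n) 0) → a n = 0 := by
  induction n with
  | zero => exact fun a H => aux_coeff0 a H
  | succ n ih =>
    intro a H
    have ha0 : a 0 = 0 := aux_coeff0 a H
    refine ih (fun n => a (n + 1)) ?_
    intro t ht
    have htc : (t : ℂ) ≠ 0 := Complex.ofReal_ne_zero.mpr ht
    have h2 : HasSum (fun n => a (n + 1) * (t : ℂ) ^ (n + 1)) 0 := by
      refine (hasSum_nat_add_iff (f := fun n => a n * (t : ℂ) ^ n) 1).mpr ?_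
      simpa [ha0] using H t ht
    have h3 := h2.div_const (t : ℂ)
    have : (fun n => a (n + 1) * (t : ℂ) ^ (n + 1) / (t : ℂ))
        = fun n => a (n + 1) * (t : ℂ) ^ n := by
      funext n
      field_simp [pow_succ]
      ring
    rw [this] at h3
    simpa using h3

/-- The sum of an everywhere-convergent power series is continuous. -/
lemma aux_cont (c : ℕ → ℂ) (g : ℝ → ℂ)
    (hg : ∀ t : ℝ, HasSum (fun n : ℕ => c n * (t : ℂ) ^ n) (g t)) : Continuous g := by
  rw [continuous_iff_continuousAt]
  intro t₀
  set R : ℝ := |t₀| + 1 with hR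
  have hR0 : 0 < R := by positivity
  have hsum : Summable fun n => ‖c n‖ * R ^ n := by
    have h2 := summable_norm_iff.mpr (hg R).summable
    simpa [norm_mul, norm_pow, Complex.norm_real, Real.norm_eq_abs, abs_of_pos hR0] using h2
  set cl : ℝ → ℝ := fun t => max (-R) (min R t) with hcl
  have hclc : Continuous cl := continuous_const.max (continuous_const.min continuous_id)
  have hclb : ∀ t, |cl t| ≤ R := by
    intro t
    rw [abs_le]
    exact ⟨le_max_left _ _, max_le (by linarith) (min_le_left _ _)⟩
  have hcleq : ∀ t, |t| ≤ R → cl t = t := by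
    intro t ht
    rw [abs_le] at ht
    simp only [hcl]
    rw [min_eq_right ht.2, max_eq_right ht.1]
  have hG : Continuous fun t : ℝ => ∑' n, c n * ((cl t : ℝ) : ℂ) ^ n := by
    refine continuous_tsum (u := fun n => ‖c n‖ * R ^ n) ?_ hsum ?_
    · intro n
      exact continuous_const.mul ((Complex.continuous_ofReal.comp hclc).pow n)
    · intro n t
      rw [norm_mul, norm_pow, Complex.norm_real, Real.norm_eq_abs]
      exact mul_le_mul_of_nonneg_left (pow_le_pow_left₀ (abs_nonneg _) (hclb t) n)
        (norm_nonneg _)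
  refine hG.continuousAt.congr ?_
  have hev : ∀ᶠ t in nhds t₀, |t| < R := by
    refine (isOpen_lt continuous_abs continuous_const).mem_nhds ?_
    simp only [Set.mem_setOf_eq, hR]
    linarith
  filter_upwards [hev] with t ht
  rw [hcleq t ht.le]
  exact (hg t).tsum_eq

/-- `cosⁿθ + sinⁿθ ≠ 1` for `n ≠ 2` when `sin θ cos θ ≠ 0`. -/
lemma aux_ne (s co : ℝ) (hs : s ≠ 0) (hc : co ≠ 0) (hpy : s ^ 2 + co ^ 2 = 1)
    (n : ℕ) (hn : n ≠ 2) : co ^ n + s ^ n ≠ 1 := by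
  have hs2 : 0 < s ^ 2 := by positivity
  have hc2 : 0 < co ^ 2 := by positivity
  have hsa : |s| < 1 := by nlinarith [sq_abs s, abs_nonneg s]
  have hca : |co| < 1 := by nlinarith [sq_abs co, abs_nonneg co]
  match n with
  | 0 => norm_num
  | 1 =>
    intro h
    have h0 : s * co = 0 := by nlinarith
    exact mul_ne_zero hs hc h0
  | (m + 3) =>
    intro h
    have h1 : |co| ^ (m + 3) < |co| ^ 2 :=
      pow_lt_pow_right_of_lt_one₀ (abs_pos.mpr hc) hca (by omega)
    have h2 : |s| ^ (m + 3) < |s| ^ 2 :=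
      pow_lt_pow_right_of_lt_one₀ (abs_pos.mpr hs) hsa (by omega)
    have h3 : co ^ (m + 3) ≤ |co| ^ (m + 3) := by
      rw [← abs_pow]; exact le_abs_self _
    have h4 : s ^ (m + 3) ≤ |s| ^ (m + 3) := by
      rw [← abs_pow]; exact le_abs_self _
    have h5 : |co| ^ 2 = co ^ 2 := sq_abs co
    have h6 : |s| ^ 2 = s ^ 2 := sq_abs s
    linarith

/-- Let `g t = Σₙ≥₁ cₙ tⁿ` be an everywhere-convergent power series with `c₀ = 0`, and let
`α = cos θ`, `β = sin θ` with `αβ ≠ 0`.  Then `φ = exp ∘ g` satisfies the functional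
equation `φ(t) = φ(αt)·φ(βt)` (equivalently `g(t) = g(αt) + g(βt)`) for all `t` if and only
if `cₙ = 0` for all `n ≠ 2`, i.e. `g t = c₂ t²`. -/
theorem stmt_2 (θ : ℝ) (hθ : Real.sin θ * Real.cos θ ≠ 0)
    (c : ℕ → ℂ) (hc0 : c 0 = 0)
    (g : ℝ → ℂ) (hg : ∀ t : ℝ, HasSum (fun n : ℕ => c n * (t : ℂ) ^ n) (g t)) :
    (∀ t : ℝ, Complex.exp (g t) =
        Complex.exp (g (Real.cos θ * t)) * Complex.exp (g (Real.sin θ * t))) ↔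
      (∀ n : ℕ, n ≠ 2 → c n = 0) ∧ ∀ t : ℝ, g t = c 2 * (t : ℂ) ^ 2 := by
  obtain ⟨hs, hc⟩ := mul_ne_zero_iff.mp hθ
  have hpy : Real.sin θ ^ 2 + Real.cos θ ^ 2 = 1 := Real.sin_sq_add_cos_sq θ
  constructor
  · intro hφ
    have hgcont : Continuous g := aux_cont c g hg
    have hg0 : g 0 = 0 := by
      have h0 : HasSum (fun n : ℕ => c n * ((0 : ℝ) : ℂ) ^ n) (c 0 * ((0:ℝ):ℂ) ^ 0) :=
        hasSum_single 0 (by intro n hn; simp [zero_pow hn])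
      have := (hg 0).unique h0
      simpa [hc0] using this
    set h : ℝ → ℂ := fun t => g t - (g (Real.cos θ * t) + g (Real.sin θ * t)) with hh
    have hcont : Continuous h := by
      apply hgcont.sub
      exact (hgcont.comp (continuous_const.mul continuous_id)).add
        (hgcont.comp (continuous_const.mul continuous_id))
    have hexp : ∀ t, Complex.exp (h t) = 1 := by
      intro t
      rw [hh]
      simp only [Complex.exp_sub, Complex.exp_add]
      rw [← hφ t]
      exact div_self (Complex.exp_ne_zero _)
    have hSeq : {t : ℝ | h t = 0} = h ⁻¹' (Metric.ball 0 (2 * Real.pi)) := by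
      ext t
      simp only [Set.mem_setOf_eq, Set.mem_preimage, Metric.mem_ball, dist_zero_right]
      constructor
      · intro ht
        rw [ht]
        simpa using Real.two_pi_pos
      · intro ht
        obtain ⟨k, hk⟩ := Complex.exp_eq_one_iff.mp (hexp t)
        have hnrm : ‖(k : ℂ) * (2 * (Real.pi : ℂ) * Complex.I)‖ = |(k : ℝ)| * (2 * Real.pi) := by
          simp [norm_mul, Complex.norm_real, Real.norm_eq_abs,
            abs_of_pos Real.pi_pos]
        rw [hk, hnrm] at ht
        have hk1 : |(k : ℝ)| < 1 := by
          by_contra hk1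
          push_neg at hk1
          nlinarith [Real.two_pi_pos]
        have : k = 0 := by
          have habs : |k| < 1 := by
            exact_mod_cast (by rwa [← Int.cast_abs] at hk1 : ((|k| : ℤ) : ℝ) < 1)
          exact Int.abs_lt_one_iff.mp habs
        rw [hk, this]
        simp
    have hclopen : IsClopen {t : ℝ | h t = 0} := by
      constructor
      · exact isClosed_eq hcont continuous_const
      · rw [hSeq]
        exact Metric.isOpen_ball.preimage hcont
    have h0mem : (0 : ℝ) ∈ {t : ℝ | h t = 0} := by
      simp only [Set.mem_setOf_eq, hh]
      simp [hg0]
    have huniv := hclopen.eq_univ ⟨0, h0mem⟩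
    have hz : ∀ t, h t = 0 := by
      intro t
      have : t ∈ {t : ℝ | h t = 0} := huniv ▸ Set.mem_univ t
      exact this
    have hd : ∀ n : ℕ, c n * (1 - (Real.cos θ : ℂ) ^ n - (Real.sin θ : ℂ) ^ n) = 0 := by
      intro n
      refine aux_coeffn n (fun n => c n * (1 - (Real.cos θ : ℂ) ^ n - (Real.sin θ : ℂ) ^ n)) ?_
      intro t _
      have hfin := (hg t).sub ((hg (Real.cos θ * t)).add (hg (Real.sin θ * t)))
      have h0 : g t - (g (Real.cos θ * t) + g (Real.sin θ * t)) = 0 := hz t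
      rw [h0] at hfin
      have heq : (fun n : ℕ => c n * (t : ℂ) ^ n -
          (c n * ((Real.cos θ * t : ℝ) : ℂ) ^ n + c n * ((Real.sin θ * t : ℝ) : ℂ) ^ n))
          = fun n : ℕ => c n * (1 - (Real.cos θ : ℂ) ^ n - (Real.sin θ : ℂ) ^ n) * (t : ℂ) ^ n := by
        funext n
        push_cast
        ring
      rw [heq] at hfin
      exact hfin
    have hcoeff : ∀ n : ℕ, n ≠ 2 → c n = 0 := by
      intro n hn
      have := hd n
      rcases mul_eq_zero.mp this with h | h
      · exact h
      · exfalso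
        have hre : ((1 - Real.cos θ ^ n - Real.sin θ ^ n : ℝ) : ℂ) = 0 := by
          rw [Complex.ofReal_sub, Complex.ofReal_sub, Complex.ofReal_pow, Complex.ofReal_pow,
            Complex.ofReal_one]
          exact h
        have : (1 - Real.cos θ ^ n - Real.sin θ ^ n : ℝ) = 0 := by exact_mod_cast hre
        exact aux_ne (Real.sin θ) (Real.cos θ) hs hc hpy n hn (by linarith)
    refine ⟨hcoeff, ?_⟩
    intro t
    have h2 : HasSum (fun n : ℕ => c n * (t : ℂ) ^ n) (c 2 * (t : ℂ) ^ 2) :=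
      hasSum_single 2 (by intro n hn; rw [hcoeff n hn, zero_mul])
    exact (hg t).unique h2
  · rintro ⟨-, h2⟩ t
    rw [h2 t, h2 (Real.cos θ * t), h2 (Real.sin θ * t), ← Complex.exp_add]
    congr 1
    have hpyc : Complex.sin θ ^ 2 + Complex.cos θ ^ 2 = 1 := Complex.sin_sq_add_cos_sq θ
    push_cast
    linear_combination -c 2 * (t : ℂ) ^ 2 * hpyc
end

section
/- The shape factor r = 3√6·|λ₁λ₂λ₃|/(λ₁²+λ₂²+λ₃²)^{3/2}, for traceless triples (λ₁,λ₂,λ₃), attains the value 0 iff some λᵢ = 0, and attains the value 1 iff two of the λᵢ are equal; moreover r takes every value in [0,1]. -/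
/-- Properties of the quadrupole shape factor
`r = 3√6 |λ₁λ₂λ₃| / (λ₁²+λ₂²+λ₃²)^{3/2}` on traceless triples: `0 ≤ r ≤ 1`,
`r = 0` iff some `λᵢ = 0`, `r = 1` iff two of the `λᵢ` are equal, and `r` attains
every value in `[0,1]`. -/
theorem stmt_15
    (r : ℝ → ℝ → ℝ → ℝ)
    (hr : ∀ l1 l2 l3 : ℝ, r l1 l2 l3 =
      3 * Real.sqrt 6 * |l1 * l2 * l3| / (l1 ^ 2 + l2 ^ 2 + l3 ^ 2) ^ ((3 : ℝ) / 2)) :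
    (∀ l1 l2 l3 : ℝ, l1 + l2 + l3 = 0 → ¬(l1 = 0 ∧ l2 = 0 ∧ l3 = 0) →
      (0 ≤ r l1 l2 l3 ∧ r l1 l2 l3 ≤ 1) ∧
      (r l1 l2 l3 = 0 ↔ l1 = 0 ∨ l2 = 0 ∨ l3 = 0) ∧
      (r l1 l2 l3 = 1 ↔ l1 = l2 ∨ l1 = l3 ∨ l2 = l3)) ∧
    (∀ t ∈ Set.Icc (0 : ℝ) 1, ∃ l1 l2 l3 : ℝ, l1 + l2 + l3 = 0 ∧
      ¬(l1 = 0 ∧ l2 = 0 ∧ l3 = 0) ∧ r l1 l2 l3 = t) := by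
  have h6 : (0:ℝ) < Real.sqrt 6 := Real.sqrt_pos.mpr (by norm_num)
  have h6sq : Real.sqrt 6 ^ 2 = 6 := Real.sq_sqrt (by norm_num)
  constructor
  · intro l1 l2 l3 hsum hne
    have hl3 : l3 = -l1 - l2 := by linarith
    subst hl3
    have h1 : l1 ≠ 0 ∨ l2 ≠ 0 := by
      by_contra h
      push_neg at h
      exact hne ⟨h.1, h.2, by simp [h.1, h.2]⟩
    set S : ℝ := l1 ^ 2 + l2 ^ 2 + (-l1 - l2) ^ 2 with hSdef
    have hS : 0 < S := by
      rcases h1 with h | h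
      · have := pow_pos (abs_pos.mpr h) 2
        rw [sq_abs] at this
        nlinarith [sq_nonneg l2, sq_nonneg (-l1 - l2)]
      · have := pow_pos (abs_pos.mpr h) 2
        rw [sq_abs] at this
        nlinarith [sq_nonneg l1, sq_nonneg (-l1 - l2)]
    set N : ℝ := 3 * Real.sqrt 6 * |l1 * l2 * (-l1 - l2)| with hNdef
    set D : ℝ := S ^ ((3:ℝ)/2) with hDdef
    have hD : 0 < D := Real.rpow_pos_of_pos hS _
    have hN : 0 ≤ N := by positivity
    have hDsq : D ^ 2 = S ^ 3 := by
      rw [hDdef, ← Real.rpow_natCast (S ^ ((3:ℝ)/2)) 2, ← Real.rpow_mul hS.le,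
        show ((3:ℝ)/2 * (2:ℕ)) = ((3:ℕ):ℝ) by norm_num, Real.rpow_natCast]
    have hNsq : N ^ 2 = 54 * (l1 * l2 * (-l1 - l2)) ^ 2 := by
      rw [hNdef, mul_pow, mul_pow, sq_abs, h6sq]; ring
    have key : S ^ 3 - 54 * (l1 * l2 * (-l1 - l2)) ^ 2 =
        2 * ((l1 - l2) * (l1 - (-l1 - l2)) * (l2 - (-l1 - l2))) ^ 2 := by
      rw [hSdef]; ring
    have hNleD : N ≤ D := by
      have hsq : N ^ 2 ≤ D ^ 2 := by
        rw [hDsq, hNsq]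
        nlinarith [sq_nonneg ((l1 - l2) * (l1 - (-l1 - l2)) * (l2 - (-l1 - l2)))]
      nlinarith
    have hreq : r l1 l2 (-l1 - l2) = N / D := by rw [hr]
    clear_value S N D
    refine ⟨⟨by rw [hreq]; positivity, by rw [hreq]; exact div_le_one_of_le₀ hNleD hD.le⟩, ?_, ?_⟩
    · rw [hreq, div_eq_zero_iff]
      constructor
      · rintro (h | h)
        · rw [hNdef] at h
          have hp : |l1 * l2 * (-l1 - l2)| = 0 := by
            rcases mul_eq_zero.mp h with h' | h'
            · exact absurd h' (by positivity)
            · exact h'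
          have := abs_eq_zero.mp hp
          rcases mul_eq_zero.mp this with h' | h'
          · rcases mul_eq_zero.mp h' with h'' | h''
            · exact Or.inl h''
            · exact Or.inr (Or.inl h'')
          · exact Or.inr (Or.inr h')
        · exact absurd h hD.ne'
      · intro h
        left
        rw [hNdef]
        have hp : l1 * l2 * (-l1 - l2) = 0 := by
          rcases h with h | h | h <;> rw [h] <;> ring
        rw [hp, abs_zero, mul_zero]
    · rw [hreq, div_eq_one_iff_eq hD.ne']
      constructor
      · intro h
        have hsq : N ^ 2 = D ^ 2 := by rw [h]
        rw [hNsq, hDsq] at hsq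
        have hprod : ((l1 - l2) * (l1 - (-l1 - l2)) * (l2 - (-l1 - l2))) ^ 2 = 0 := by
          nlinarith
        have := (pow_eq_zero_iff two_ne_zero).mp hprod
        rcases mul_eq_zero.mp this with h' | h'
        · rcases mul_eq_zero.mp h' with h'' | h''
          · exact Or.inl (by linarith [sub_eq_zero.mp h''])
          · exact Or.inr (Or.inl (sub_eq_zero.mp h''))
        · exact Or.inr (Or.inr (sub_eq_zero.mp h'))
      · intro h
        have hprod : ((l1 - l2) * (l1 - (-l1 - l2)) * (l2 - (-l1 - l2))) = 0 := by
          rcases h with h | h | h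
          · have h0 : l1 - l2 = 0 := by linarith
            rw [h0, zero_mul, zero_mul]
          · have h0 : l1 - (-l1 - l2) = 0 := by linarith
            rw [h0, mul_zero, zero_mul]
          · have h0 : l2 - (-l1 - l2) = 0 := by linarith
            rw [h0, mul_zero]
        have hp2 : ((l1 - l2) * (l1 - (-l1 - l2)) * (l2 - (-l1 - l2))) ^ 2 = 0 := by
          rw [hprod]
          exact zero_pow two_ne_zero
        have hsq : N ^ 2 = D ^ 2 := by
          rw [hNsq, hDsq]
          linarith [key, hp2]
        have h0 : (N - D) * (N + D) = 0 := by linear_combination hsq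
        rcases mul_eq_zero.mp h0 with h0 | h0
        · linarith
        · linarith
  · intro t ht
    obtain ⟨ht0, ht1⟩ := ht
    have hFcont : ContinuousOn (fun x : ℝ =>
        3 * Real.sqrt 6 * |1 * x * (-1 - x)| /
          ((1:ℝ) ^ 2 + x ^ 2 + (-1 - x) ^ 2) ^ ((3:ℝ)/2)) (Set.Icc 0 1) := by
      apply ContinuousOn.div
      · have : Continuous fun x : ℝ => 3 * Real.sqrt 6 * |1 * x * (-1 - x)| := by
          fun_prop
        exact this.continuousOn
      · have hb : Continuous fun x : ℝ => (1:ℝ) ^ 2 + x ^ 2 + (-1 - x) ^ 2 := by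
          fun_prop
        exact hb.continuousOn.rpow_const (fun x _ => Or.inl (by positivity))
      · intro x _
        exact (Real.rpow_pos_of_pos (by positivity) _).ne'
    have hsub := intermediate_value_Icc (zero_le_one) hFcont
    have hF0 : (fun x : ℝ =>
        3 * Real.sqrt 6 * |1 * x * (-1 - x)| /
          ((1:ℝ) ^ 2 + x ^ 2 + (-1 - x) ^ 2) ^ ((3:ℝ)/2)) 0 = 0 := by
      norm_num
    have hF1 : (fun x : ℝ =>
        3 * Real.sqrt 6 * |1 * x * (-1 - x)| /
          ((1:ℝ) ^ 2 + x ^ 2 + (-1 - x) ^ 2) ^ ((3:ℝ)/2)) 1 = 1 := by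
      have h1 : |1 * (1:ℝ) * (-1 - 1)| = 2 := by norm_num
      have h2 : ((1:ℝ) ^ 2 + 1 ^ 2 + (-1 - 1) ^ 2) = 6 := by norm_num
      have h3 : (6:ℝ) ^ ((3:ℝ)/2) = 6 * Real.sqrt 6 := by
        have he : (3:ℝ)/2 = 1 + 1/2 := by norm_num
        rw [he, Real.rpow_add (by norm_num), Real.rpow_one,
          ← Real.sqrt_eq_rpow]
      simp only [h1, h2, h3]
      rw [div_eq_one_iff_eq (by positivity)]
      ring
    beta_reduce at hF0 hF1
    rw [hF0, hF1] at hsub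
    obtain ⟨x, _, hx⟩ := hsub ⟨ht0, ht1⟩
    refine ⟨1, x, -1 - x, by ring, ?_, ?_⟩
    · rintro ⟨h, -, -⟩; norm_num at h
    · rw [hr]
      exact hx
end

section
/- If (b₋₂,…,b₂) are i.i.d. standard Gaussian, then the random matrix Q with entries Q₁₁ = 2b₀/√3, Q₂₂ = −b₀/√3 + b₂, Q₃₃ = −b₀/√3 − b₂, Q₁₂ = Q₂₁ = b₁, Q₁₃ = Q₃₁ = b₋₁, Q₂₃ = Q₃₂ = b₋₂ (up to normalization) is symmetric and traceless, and its distribution is invariant under conjugation by any fixed rotation R ∈ SO(3). -/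
/-!
The coefficients `(b₋₂, …, b₂)` form a standard Gaussian vector of `ℝ⁵`. Conjugation by an
orthogonal `R` preserves symmetric traceless matrices, and `tr (Q²) = 2 ‖b‖²`, so it acts on the
coefficient vector by a linear isometry of `ℝ⁵`. The standard Gaussian measure is invariant under
linear isometries.
-/

open MeasureTheory ProbabilityTheory Matrix

/-- The symmetric traceless matrix built from the quadrupole coefficients
`(b₋₂, b₋₁, b₀, b₁, b₂) = (v 0, v 1, v 2, v 3, v 4)`. -/
noncomputable def quadMatrix (v : Fin 5 → ℝ) : Matrix (Fin 3) (Fin 3) ℝ :=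
  !![2 * v 2 / Real.sqrt 3, v 3, v 1;
     v 3, -v 2 / Real.sqrt 3 + v 4, v 0;
     v 1, v 0, -v 2 / Real.sqrt 3 - v 4]

instance : MeasurableSpace (Matrix (Fin 3) (Fin 3) ℝ) :=
  (inferInstance : MeasurableSpace (Fin 3 → Fin 3 → ℝ))

open WithLp

lemma quadMatrix_transpose (v : Fin 5 → ℝ) : (quadMatrix v)ᵀ = quadMatrix v := by
  ext i j; fin_cases i <;> fin_cases j <;> simp [quadMatrix]

lemma trace_quadMatrix (v : Fin 5 → ℝ) : (quadMatrix v).trace = 0 := by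
  simp [Matrix.trace, quadMatrix, Fin.sum_univ_three]
  ring

lemma quadMatrix_add (v w : Fin 5 → ℝ) :
    quadMatrix (v + w) = quadMatrix v + quadMatrix w := by
  ext i j; fin_cases i <;> fin_cases j <;> simp [quadMatrix] <;> ring

lemma quadMatrix_smul (c : ℝ) (v : Fin 5 → ℝ) :
    quadMatrix (c • v) = c • quadMatrix v := by
  ext i j; fin_cases i <;> fin_cases j <;> simp [quadMatrix] <;> ring

lemma measurable_quadMatrix : Measurable quadMatrix := by
  refine measurable_pi_lambda _ fun i => measurable_pi_lambda _ fun j => ?_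
  fin_cases i <;> fin_cases j <;> simp [quadMatrix] <;> fun_prop

lemma trace_quadMatrix_mul_self (v : Fin 5 → ℝ) :
    (quadMatrix v * quadMatrix v).trace = 2 * ∑ i, v i ^ 2 := by
  have h3 : Real.sqrt 3 ^ 2 = 3 := Real.sq_sqrt (by norm_num)
  simp [Matrix.trace, quadMatrix, Fin.sum_univ_three, Fin.sum_univ_five]
  field_simp
  linear_combination (-2 * v 2 ^ 2) * h3

noncomputable def quadCoeffs (M : Matrix (Fin 3) (Fin 3) ℝ) : Fin 5 → ℝ :=
  ![M 1 2, M 0 2, Real.sqrt 3 / 2 * M 0 0, M 0 1, (M 1 1 - M 2 2) / 2]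

lemma quadCoeffs_add (M N : Matrix (Fin 3) (Fin 3) ℝ) :
    quadCoeffs (M + N) = quadCoeffs M + quadCoeffs N := by
  funext i; fin_cases i <;> simp [quadCoeffs] <;> ring

lemma quadCoeffs_smul (c : ℝ) (M : Matrix (Fin 3) (Fin 3) ℝ) :
    quadCoeffs (c • M) = c • quadCoeffs M := by
  funext i; fin_cases i <;> simp [quadCoeffs] <;> ring

lemma quadMatrix_quadCoeffs {M : Matrix (Fin 3) (Fin 3) ℝ} (hs : Mᵀ = M) (ht : M.trace = 0) :
    quadMatrix (quadCoeffs M) = M := by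
  have h3 : Real.sqrt 3 ≠ 0 := by positivity
  have ht' : M 0 0 + M 1 1 + M 2 2 = 0 := by
    simpa [Matrix.trace, Fin.sum_univ_three] using ht
  have hs' (i j) : M j i = M i j := congrFun (congrFun hs i) j
  ext i j
  fin_cases i <;> fin_cases j <;> simp [quadMatrix, quadCoeffs, hs' 0 1, hs' 0 2, hs' 1 2]
    <;> field_simp <;> linear_combination (-1) * ht'

section Conjugation

variable {n R : Type*} [Fintype n] [CommRing R]

lemma transpose_mul_mul_transpose (U A : Matrix n n R) : (U * A * Uᵀ)ᵀ = U * Aᵀ * Uᵀ := by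
  rw [transpose_mul, transpose_mul, transpose_transpose, Matrix.mul_assoc]

variable [DecidableEq n] {U : Matrix n n R}

lemma trace_mul_mul_transpose (hU : Uᵀ * U = 1) (A : Matrix n n R) :
    (U * A * Uᵀ).trace = A.trace := by
  rw [trace_mul_cycle, hU, Matrix.one_mul]

lemma mul_mul_transpose_mul_mul_mul_transpose (hU : Uᵀ * U = 1) (A B : Matrix n n R) :
    U * A * Uᵀ * (U * B * Uᵀ) = U * (A * B) * Uᵀ := by
  simp only [Matrix.mul_assoc]
  rw [← Matrix.mul_assoc Uᵀ, hU, Matrix.one_mul]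

end Conjugation

noncomputable def quadConj (U : Matrix (Fin 3) (Fin 3) ℝ) :
    EuclideanSpace ℝ (Fin 5) →ₗ[ℝ] EuclideanSpace ℝ (Fin 5) where
  toFun v := toLp 2 (quadCoeffs (U * quadMatrix (ofLp v) * Uᵀ))
  map_add' v w := by
    rw [ofLp_add, quadMatrix_add, Matrix.mul_add, Matrix.add_mul, quadCoeffs_add, toLp_add]
  map_smul' c v := by
    rw [ofLp_smul, quadMatrix_smul, Matrix.mul_smul, Matrix.smul_mul, quadCoeffs_smul, toLp_smul,
      RingHom.id_apply]

section quadConj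

variable {U : Matrix (Fin 3) (Fin 3) ℝ} (hU : Uᵀ * U = 1)
include hU

lemma quadMatrix_quadConj (v : EuclideanSpace ℝ (Fin 5)) :
    quadMatrix (ofLp (quadConj U v)) = U * quadMatrix (ofLp v) * Uᵀ :=
  quadMatrix_quadCoeffs (by rw [transpose_mul_mul_transpose, quadMatrix_transpose])
    (by rw [trace_mul_mul_transpose hU, trace_quadMatrix])

lemma norm_quadConj (v : EuclideanSpace ℝ (Fin 5)) : ‖quadConj U v‖ = ‖v‖ := by
  have key := trace_quadMatrix_mul_self (ofLp (quadConj U v))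
  rw [quadMatrix_quadConj hU, mul_mul_transpose_mul_mul_mul_transpose hU,
    trace_mul_mul_transpose hU, trace_quadMatrix_mul_self] at key
  rw [← sq_eq_sq₀ (norm_nonneg _) (norm_nonneg _), EuclideanSpace.real_norm_sq_eq,
    EuclideanSpace.real_norm_sq_eq]
  linarith

noncomputable def quadConjIsometry : EuclideanSpace ℝ (Fin 5) ≃ₗᵢ[ℝ] EuclideanSpace ℝ (Fin 5) :=
  LinearIsometry.toLinearIsometryEquiv ⟨quadConj U, norm_quadConj hU⟩ rfl

end quadConj

lemma map_toLp_eq_stdGaussian {Ω ι : Type*} [Fintype ι] [MeasurableSpace Ω] {μ : Measure Ω}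
    {X : ι → Ω → ℝ} (hX : ∀ i, Measurable (X i)) (hindep : iIndepFun X μ)
    (hgauss : ∀ i, μ.map (X i) = gaussianReal 0 1) :
    μ.map (fun ω => toLp 2 (fun i => X i ω)) = stdGaussian (EuclideanSpace ℝ ι) := by
  rw [← map_pi_eq_stdGaussian, ← funext hgauss, ← hindep.map_fun_eq_pi_map
    (fun i => (hX i).aemeasurable), Measure.map_map (by fun_prop) (by fun_prop)]
  rfl

theorem stmt_19_general {Ω : Type*} [MeasureSpace Ω]
    (b : Fin 5 → Ω → ℝ) (hmeas : ∀ i, Measurable (b i))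
    (hindep : iIndepFun b ℙ)
    (hgauss : ∀ i, Measure.map (b i) ℙ = gaussianReal 0 1) :
    (∀ v : Fin 5 → ℝ, (quadMatrix v)ᵀ = quadMatrix v ∧ (quadMatrix v).trace = 0) ∧
    ∀ R : Matrix (Fin 3) (Fin 3) ℝ, R ∈ Matrix.specialOrthogonalGroup (Fin 3) ℝ →
      Measure.map (fun ω => R * quadMatrix (fun i => b i ω) * Rᵀ) ℙ =
        Measure.map (fun ω => quadMatrix (fun i => b i ω)) ℙ := by
  refine ⟨fun v => ⟨quadMatrix_transpose v, trace_quadMatrix v⟩, fun R hR => ?_⟩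
  have hRR : Rᵀ * R = 1 := (mem_orthogonalGroup_iff' (Fin 3) ℝ).mp hR.1
  set X : Ω → EuclideanSpace ℝ (Fin 5) := fun ω => toLp 2 (fun i => b i ω)
  have hX : Measurable X := by fun_prop
  have hQ : Measurable (quadMatrix ∘ ofLp : EuclideanSpace ℝ (Fin 5) → _) :=
    measurable_quadMatrix.comp (by fun_prop)
  have hT : Measurable (quadConjIsometry hRR) := by fun_prop
  calc Measure.map (fun ω => R * quadMatrix (fun i => b i ω) * Rᵀ) ℙ
      = ((Measure.map X ℙ).map (quadConjIsometry hRR)).map (quadMatrix ∘ ofLp) := by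
        rw [Measure.map_map hQ hT, Measure.map_map (hQ.comp hT) hX]
        exact congrArg (Measure.map · ℙ) (funext fun ω => (quadMatrix_quadConj hRR (X ω)).symm)
    _ = (Measure.map X ℙ).map (quadMatrix ∘ ofLp) := by
        rw [map_toLp_eq_stdGaussian hmeas hindep hgauss, stdGaussian_map]
    _ = Measure.map (fun ω => quadMatrix (fun i => b i ω)) ℙ := Measure.map_map hQ hX

/-- If `(b₋₂,…,b₂)` are i.i.d. standard Gaussians, the random quadrupole matrix `Q` with
`Q₁₁ = 2b₀/√3`, `Q₂₂ = −b₀/√3 + b₂`, `Q₃₃ = −b₀/√3 − b₂`, `Q₁₂ = b₁`, `Q₁₃ = b₋₁`,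
`Q₂₃ = b₋₂` is symmetric and traceless, and its law is invariant under conjugation by any
fixed `R ∈ SO(3)`. -/
theorem stmt_19 {Ω : Type*} [MeasureSpace Ω] [IsProbabilityMeasure (ℙ : Measure Ω)]
    (b : Fin 5 → Ω → ℝ) (hmeas : ∀ i, Measurable (b i))
    (hindep : iIndepFun b ℙ)
    (hgauss : ∀ i, Measure.map (b i) ℙ = gaussianReal 0 1) :
    (∀ v : Fin 5 → ℝ, (quadMatrix v)ᵀ = quadMatrix v ∧ (quadMatrix v).trace = 0) ∧
    ∀ R : Matrix (Fin 3) (Fin 3) ℝ, R ∈ Matrix.specialOrthogonalGroup (Fin 3) ℝ →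
      Measure.map (fun ω => R * quadMatrix (fun i => b i ω) * Rᵀ) ℙ =
        Measure.map (fun ω => quadMatrix (fun i => b i ω)) ℙ :=
  stmt_19_general b hmeas hindep hgauss
end
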